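/- Let C be an additive right polycyclic code induced by a binary vector a which contains no nonzero binary polynomial, and suppose C is generated as an F2[x]-submodule of R_n by a nonbinary element α g_1 + g_2 with g_1, g_2 binary, g_1 of minimal degree among binary parts of nonbinary elements of C, and g_1 dividing x^n − a(x) in F2[x]. Then x^n − a(x) divides ((x^n − a(x))/g_1)·g_2 in F2[x]. -/

import Mathlib

open Polynomial

noncomputable section

abbrev F4 : Type := GaloisField 2 2

def IsBin (z : F4) : Prop := z = 0 ∨ z = 1

def IsBinVec {n : ℕ} (a : Fin n → F4) : Prop := ∀ i, IsBin (a i)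

def IsBinPoly (p : Polynomial F4) : Prop := ∀ i, IsBin (p.coeff i)

def polyOfVec {n : ℕ} (c : Fin n → F4) : Polynomial F4 :=
  ∑ i : Fin n, Polynomial.C (c i) * X ^ (i : ℕ)

def rightShift {n : ℕ} (a c : Fin n → F4) : Fin n → F4 := fun i =>
  (if (i : ℕ) = 0 then 0 else c ⟨(i : ℕ) - 1, lt_of_le_of_lt (Nat.sub_le _ _) i.isLt⟩)
    + c ⟨n - 1, Nat.sub_lt i.pos Nat.one_pos⟩ * a i

def leftShift {n : ℕ} (a c : Fin n → F4) : Fin n → F4 := fun i =>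
  (if h : (i : ℕ) + 1 < n then c ⟨(i : ℕ) + 1, h⟩ else 0) + c ⟨0, i.pos⟩ * a i

def seqShift {n : ℕ} (a c : Fin n → F4) : Fin n → F4 := fun i =>
  if h : (i : ℕ) + 1 < n then c ⟨(i : ℕ) + 1, h⟩ else ∑ j, a j * c j

def IsRightPolycyclic {n : ℕ} (a : Fin n → F4) (C : AddSubgroup (Fin n → F4)) : Prop :=
  ∀ c ∈ C, rightShift a c ∈ C

def IsLeftPolycyclic {n : ℕ} (a : Fin n → F4) (C : AddSubgroup (Fin n → F4)) : Prop :=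
  ∀ c ∈ C, leftShift a c ∈ C

def quotMk {n : ℕ} (a : Fin n → F4) :
    Polynomial F4 →+* Polynomial F4 ⧸ Ideal.span {X ^ n - polyOfVec a} :=
  Ideal.Quotient.mk _

def codeImage {n : ℕ} (a : Fin n → F4) (C : AddSubgroup (Fin n → F4)) :
    Set (Polynomial F4 ⧸ Ideal.span {X ^ n - polyOfVec a}) :=
  (fun c => quotMk a (polyOfVec c)) '' (C : Set (Fin n → F4))

/-- `C` equals the `F2[x]`-submodule of `R_n` generated by the single element
`α g1 + g2`. -/
def GeneratesCodeOne {n : ℕ} (a : Fin n → F4) (C : AddSubgroup (Fin n → F4)) (α : F4)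
    (g1 g2 : Polynomial F4) : Prop :=
  (∀ c ∈ C, ∃ q1 : Polynomial F4, IsBinPoly q1 ∧
      quotMk a (polyOfVec c) = quotMk a (q1 * (Polynomial.C α * g1 + g2))) ∧
  (∀ q1 : Polynomial F4, IsBinPoly q1 →
      quotMk a (q1 * (Polynomial.C α * g1 + g2)) ∈ codeImage a C)

/- Since `q * g1 = x^n - a(x)`, the generator multiple `q * (α g1 + g2)` equals the binary
polynomial `q * g2` in `R_n`. Its remainder modulo the monic binary polynomial `x^n - a(x)` is
then a binary element of `C` of degree `< n`, hence zero; and a divisibility between binary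
polynomials with monic binary divisor has a binary quotient, by division over `F2`. -/

section Lifts

variable {R S : Type*} [CommRing R] [CommRing S] {φ : R →+* S} {f p : S[X]}

theorem modByMonic_mem_lifts (hp : p ∈ lifts φ) (hf : f ∈ lifts φ) (hmonic : f.Monic) :
    p %ₘ f ∈ lifts φ := by
  obtain ⟨F, rfl, -, hF⟩ := lifts_and_natDegree_eq_and_monic hf hmonic
  obtain ⟨P, rfl⟩ := hp
  exact ⟨P %ₘ F, map_modByMonic φ hF⟩

theorem exists_mem_lifts_eq_mul_of_dvd (hφ : Function.Injective φ) (hp : p ∈ lifts φ)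
    (hf : f ∈ lifts φ) (hmonic : f.Monic) (hdvd : f ∣ p) : ∃ r ∈ lifts φ, p = f * r := by
  obtain ⟨F, rfl, -, hF⟩ := lifts_and_natDegree_eq_and_monic hf hmonic
  obtain ⟨P, rfl⟩ := hp
  obtain ⟨Q, rfl⟩ := (map_dvd_map φ hφ hF).1 hdvd
  exact ⟨Q.map φ, ⟨Q, rfl⟩, Polynomial.map_mul φ⟩

end Lifts

theorem isBin_iff_mem_range (z : F4) : IsBin z ↔ z ∈ Set.range (algebraMap (ZMod 2) F4) := by
  constructor
  · rintro (rfl | rfl)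
    exacts [⟨0, map_zero _⟩, ⟨1, map_one _⟩]
  · rintro ⟨y, rfl⟩
    fin_cases y
    exacts [Or.inl (map_zero _), Or.inr (map_one _)]

theorem isBinPoly_iff_mem_lifts (p : F4[X]) :
    IsBinPoly p ↔ p ∈ lifts (algebraMap (ZMod 2) F4) :=
  ((lifts_iff_coeff_lifts p).trans (forall_congr' fun _ => (isBin_iff_mem_range _).symm)).symm

section PolyOfVec

variable {n : ℕ}

theorem degree_polyOfVec_lt (c : Fin n → F4) : (polyOfVec c).degree < (n : WithBot ℕ) := by
  refine (degree_sum_le _ _).trans_lt ((Finset.sup_lt_iff (WithBot.bot_lt_coe n)).2 ?_)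
  exact fun i _ => (degree_C_mul_X_pow_le _ _).trans_lt (WithBot.coe_lt_coe.2 i.isLt)

theorem monic_X_pow_sub_polyOfVec (c : Fin n → F4) : (X ^ n - polyOfVec c).Monic :=
  monic_X_pow_sub (degree_polyOfVec_lt c)

theorem degree_X_pow_sub_polyOfVec (c : Fin n → F4) :
    (X ^ n - polyOfVec c).degree = (n : WithBot ℕ) := by
  have hlt : (polyOfVec c).degree < (X ^ n : F4[X]).degree := by
    rw [degree_X_pow]
    exact degree_polyOfVec_lt c
  rw [degree_sub_eq_left_of_degree_lt hlt, degree_X_pow]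

theorem IsBinVec.X_pow_sub_polyOfVec_mem_lifts {a : Fin n → F4} (ha : IsBinVec a) :
    X ^ n - polyOfVec a ∈ lifts (algebraMap (ZMod 2) F4) := by
  have hsum : polyOfVec a ∈ lifts (algebraMap (ZMod 2) F4) := sum_mem fun i _ =>
    mul_mem (C'_mem_lifts ((isBin_iff_mem_range _).1 (ha i))) (X_pow_mem_lifts _ _)
  exact (lifts_iff_liftsRing _ _).2 <|
    sub_mem ((lifts_iff_liftsRing _ _).1 (X_pow_mem_lifts _ n)) ((lifts_iff_liftsRing _ _).1 hsum)

theorem quotMk_modByMonic (a : Fin n → F4) (p : F4[X]) :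
    quotMk a (p %ₘ (X ^ n - polyOfVec a)) = quotMk a p := by
  refine Ideal.Quotient.eq.2 (Ideal.mem_span_singleton.2 ?_)
  rw [modByMonic_eq_sub_mul_div, sub_sub_cancel_left, dvd_neg]
  exact dvd_mul_right _ _

theorem quotMk_mul_C_mul_add {a : Fin n → F4} (α : F4) {q g1 : F4[X]} (g2 : F4[X])
    (hq : q * g1 = X ^ n - polyOfVec a) :
    quotMk a (q * (C α * g1 + g2)) = quotMk a (q * g2) :=
  Ideal.Quotient.eq.2 (Ideal.mem_span_singleton.2 ⟨C α, by rw [← hq]; ring⟩)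

end PolyOfVec

theorem stmt_9_general (n : ℕ) (a : Fin n → F4) (ha : IsBinVec a)
    (C : AddSubgroup (Fin n → F4))
    (α : F4)
    (hnobin : ∀ p : Polynomial F4, IsBinPoly p → p.degree < (n : WithBot ℕ) →
      quotMk a p ∈ codeImage a C → p = 0)
    (g1 g2 : Polynomial F4) (hg2bin : IsBinPoly g2)
    (hgen : GeneratesCodeOne a C α g1 g2)
    (q : Polynomial F4) (hqbin : IsBinPoly q) (hq : q * g1 = X ^ n - polyOfVec a) :
    ∃ r : Polynomial F4, IsBinPoly r ∧ q * g2 = (X ^ n - polyOfVec a) * r := by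
  have hf := ha.X_pow_sub_polyOfVec_mem_lifts
  have hmonic := monic_X_pow_sub_polyOfVec a
  have hprod : q * g2 ∈ lifts (algebraMap (ZMod 2) F4) :=
    mul_mem ((isBinPoly_iff_mem_lifts q).1 hqbin) ((isBinPoly_iff_mem_lifts g2).1 hg2bin)
  have hcode : quotMk a (q * g2 %ₘ (X ^ n - polyOfVec a)) ∈ codeImage a C := by
    rw [quotMk_modByMonic, ← quotMk_mul_C_mul_add α g2 hq]
    exact hgen.2 q hqbin
  have hrem : q * g2 %ₘ (X ^ n - polyOfVec a) = 0 :=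
    hnobin _ ((isBinPoly_iff_mem_lifts _).2 (modByMonic_mem_lifts hprod hf hmonic))
      (degree_X_pow_sub_polyOfVec a ▸ degree_modByMonic_lt _ hmonic) hcode
  obtain ⟨r, hr, hqg2⟩ := exists_mem_lifts_eq_mul_of_dvd (algebraMap (ZMod 2) F4).injective
    hprod hf hmonic ((modByMonic_eq_zero_iff_dvd hmonic).1 hrem)
  exact ⟨r, (isBinPoly_iff_mem_lifts r).2 hr, hqg2⟩

/-- if the additive right polycyclic code `C` (induced by the
binary vector `a`) contains no nonzero binary polynomial and is generated as an
`F2[x]`-submodule of `R_n` by a nonbinary element `α g1 + g2` with `g1` of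
minimal degree among binary parts of nonbinary elements of `C` and
`g1 ∣ x^n - a(x)` in `F2[x]` (say `q · g1 = x^n - a(x)` with `q` binary), then
`x^n - a(x)` divides `((x^n - a(x))/g1) · g2 = q · g2` in `F2[x]`. -/
theorem stmt_9 (n : ℕ) (hn : 0 < n) (a : Fin n → F4) (ha : IsBinVec a)
    (C : AddSubgroup (Fin n → F4)) (hC : IsRightPolycyclic a C)
    (α : F4) (hα : α ^ 2 + α + 1 = 0)
    (hnobin : ∀ p : Polynomial F4, IsBinPoly p → p.degree < (n : WithBot ℕ) →
      quotMk a p ∈ codeImage a C → p = 0)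
    (g1 g2 : Polynomial F4) (hg1bin : IsBinPoly g1) (hg2bin : IsBinPoly g2)
    (hg1deg : g1.degree < (n : WithBot ℕ)) (hg2deg : g2.degree < (n : WithBot ℕ))
    (hg1ne : g1 ≠ 0)
    (hmem : quotMk a (Polynomial.C α * g1 + g2) ∈ codeImage a C)
    (hmin : ∀ h1 h2 : Polynomial F4, IsBinPoly h1 → IsBinPoly h2 → h1 ≠ 0 →
      h1.degree < (n : WithBot ℕ) → h2.degree < (n : WithBot ℕ) →
      quotMk a (Polynomial.C α * h1 + h2) ∈ codeImage a C → g1.degree ≤ h1.degree)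
    (hgen : GeneratesCodeOne a C α g1 g2)
    (q : Polynomial F4) (hqbin : IsBinPoly q) (hq : q * g1 = X ^ n - polyOfVec a) :
    ∃ r : Polynomial F4, IsBinPoly r ∧ q * g2 = (X ^ n - polyOfVec a) * r :=
  stmt_9_general n a ha C α hnobin g1 g2 hg2bin hgen q hqbin hq
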